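/- Let L be a feasible set of links (a_L(v) ≤ 1 for all ℓ_v ∈ L) and K ≥ 1. Then there exists a subset L' ⊆ L with |L'| ≥ c·|L|/K for an absolute constant c > 0 such that L' is K-bi-feasible: a_{L'}(v) ≤ 1/K and a_v(L') ≤ 2/K for every ℓ_v ∈ L'. -/

import Mathlib

/-!
Markov's inequality keeps at least half of the links of `L` with out-affectance at most `2`;
within this set `L₁` every link has in- plus out-affectance at most `3`. Colour `L₁` with
`m = ⌈3K⌉` colours so as to minimise the total affectance between equally coloured links.
At a minimum no link can lower this potential by switching colour, so the load a link
receives from and sends to its own colour class is at most the average `3 / m ≤ 1 / K`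
over all colours. The largest colour class has at least `|L| / (2m) ≥ |L| / (8K)` links.
-/

open Finset Function

section Coloring

variable {α β : Type*} [Fintype α] [DecidableEq α] [DecidableEq β]

def monochromaticWeight (b : α → α → ℝ) (c : α → β) : ℝ :=
  ∑ v, ∑ w, if c w = c v then b w v else 0

def colorLoad (b : α → α → ℝ) (c : α → β) (v : α) (k : β) : ℝ :=
  ∑ w ∈ univ.erase v with c w = k, (b w v + b v w)

lemma colorLoad_eq_sum_ite (b : α → α → ℝ) (c : α → β) (v : α) (k : β) :
    colorLoad b c v k =
      (∑ w ∈ univ.erase v, if c w = k then b w v else 0) +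
        ∑ w ∈ univ.erase v, if k = c w then b v w else 0 := by
  simp only [colorLoad, sum_filter, ← sum_add_distrib]
  refine sum_congr rfl fun w _ => ?_
  split_ifs <;> simp_all

lemma monochromaticWeight_eq_add_colorLoad (b : α → α → ℝ) (c : α → β) (v : α) :
    monochromaticWeight b c =
      b v v + (∑ v' ∈ univ.erase v, ∑ w ∈ univ.erase v, if c w = c v' then b w v' else 0) +
        colorLoad b c v (c v) := by
  simp only [monochromaticWeight, colorLoad_eq_sum_ite, ← add_sum_erase _ _ (mem_univ v),
    if_true, sum_add_distrib]
  ring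

lemma colorLoad_update_self (b : α → α → ℝ) (c : α → β) (v : α) (k k' : β) :
    colorLoad b (update c v k) v k' = colorLoad b c v k' := by
  unfold colorLoad
  congr 1
  exact filter_congr fun w hw => by rw [update_of_ne (ne_of_mem_erase hw)]

lemma monochromaticWeight_update (b : α → α → ℝ) (c : α → β) (v : α) (k : β) :
    monochromaticWeight b (update c v k) =
      monochromaticWeight b c + colorLoad b c v k - colorLoad b c v (c v) := by
  have hoff : ∀ v' ∈ univ.erase v, ∀ w ∈ univ.erase v,
      (if update c v k w = update c v k v' then b w v' else 0) =
        if c w = c v' then b w v' else 0 := fun v' hv' w hw => by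
    rw [update_of_ne (ne_of_mem_erase hw), update_of_ne (ne_of_mem_erase hv')]
  rw [monochromaticWeight_eq_add_colorLoad b _ v, monochromaticWeight_eq_add_colorLoad b c v,
    update_self, colorLoad_update_self, sum_congr rfl fun v' hv' => sum_congr rfl (hoff v' hv')]
  ring

lemma sum_colorLoad [Fintype β] (b : α → α → ℝ) (c : α → β) (v : α) :
    ∑ k, colorLoad b c v k = ∑ w ∈ univ.erase v, (b w v + b v w) :=
  sum_fiberwise _ _ _

theorem exists_coloring_card_mul_colorLoad_le [Fintype β] [Nonempty β] (b : α → α → ℝ) :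
    ∃ c : α → β, ∀ v, Fintype.card β * colorLoad b c v (c v) ≤
      ∑ w ∈ univ.erase v, (b w v + b v w) := by
  obtain ⟨c, -, hmin⟩ := exists_min_image univ (monochromaticWeight b) (univ_nonempty (α := α → β))
  refine ⟨c, fun v => ?_⟩
  have hlocal : ∀ k, colorLoad b c v (c v) ≤ colorLoad b c v k := fun k => by
    have := hmin (update c v k) (mem_univ _)
    rw [monochromaticWeight_update] at this
    linarith
  calc Fintype.card β * colorLoad b c v (c v) = ∑ _k : β, colorLoad b c v (c v) := by
        rw [sum_const, card_univ, nsmul_eq_mul]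
    _ ≤ ∑ k, colorLoad b c v k := sum_le_sum fun k _ => hlocal k
    _ = _ := sum_colorLoad b c v

end Coloring

theorem Finset.exists_large_subset_load_le {ι : Type*} [DecidableEq ι] (s : Finset ι)
    (b : ι → ι → ℝ) {m : ℕ} (hm : 0 < m) :
    ∃ t ⊆ s, (#s : ℝ) ≤ m * #t ∧
      ∀ v ∈ t, m * ∑ w ∈ t.erase v, (b w v + b v w) ≤ ∑ w ∈ s.erase v, (b w v + b v w) := by
  have : NeZero m := ⟨hm.ne'⟩
  have hm' : (m : ℝ) ≠ 0 := by exact_mod_cast hm.ne'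
  obtain ⟨c, hc⟩ := exists_coloring_card_mul_colorLoad_le (β := Fin m) fun w v : s => b w v
  obtain ⟨j, -, hj⟩ := exists_le_card_fiber_of_nsmul_le_card_of_maps_to
    (s := (univ : Finset s)) (f := c) (fun _ _ => mem_univ _) univ_nonempty
    (b := (#s : ℝ) / m) (by simp [nsmul_eq_mul, mul_div_cancel₀ _ hm'])
  have hsum : ∀ (u : Finset s) (v : s), ∑ w ∈ (u.map (Embedding.subtype _)).erase v,
      (b w v + b v w) = ∑ w ∈ u.erase v, (b w v + b v w) := fun u v => by
    have := map_erase (Embedding.subtype (· ∈ s)) u v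
    rw [Embedding.coe_subtype] at this
    rw [← this, sum_map]
    rfl
  refine ⟨({v | c v = j} : Finset s).map (Embedding.subtype _), map_subtype_subset _, ?_, ?_⟩
  · rwa [card_map, ← div_le_iff₀' (by positivity)]
  · simp only [mem_map, Embedding.coe_subtype, mem_filter, mem_univ, true_and]
    rintro _ ⟨v, rfl, rfl⟩
    have hs := hsum univ v
    rw [univ_eq_attach, attach_map_val, ← univ_eq_attach] at hs
    rw [hsum, ← filter_erase, hs]
    simpa only [Fintype.card_fin, colorLoad] using hc v

theorem Finset.exists_large_subset_sum_le_div {ι : Type*} [DecidableEq ι] (s : Finset ι)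
    {b : ι → ι → ℝ} (hb : ∀ w v, 0 ≤ b w v) (hdiag : ∀ v, b v v = 0) {B : ℝ}
    (hB : ∀ v ∈ s, ∑ w ∈ s, (b w v + b v w) ≤ B) {m : ℕ} (hm : 0 < m) :
    ∃ t ⊆ s, (#s : ℝ) ≤ m * #t ∧ ∀ v ∈ t, ∑ w ∈ t, b w v ≤ B / m ∧ ∑ w ∈ t, b v w ≤ B / m := by
  obtain ⟨t, hts, hcard, hload⟩ := s.exists_large_subset_load_le b hm
  refine ⟨t, hts, hcard, fun v hv => ?_⟩
  have hlight : ∑ w ∈ t.erase v, (b w v + b v w) ≤ B / m := by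
    rw [le_div_iff₀' (by exact_mod_cast hm)]
    refine (hload v hv).trans ?_
    rw [sum_erase (f := fun w => b w v + b v w) s (by simp [hdiag])]
    exact hB v (hts hv)
  rw [← sum_erase (f := (b · v)) t (hdiag v), ← sum_erase (f := b v) t (hdiag v)]
  exact ⟨(sum_le_sum fun w _ => le_add_of_nonneg_right (hb v w)).trans hlight,
    (sum_le_sum fun w _ => le_add_of_nonneg_left (hb w v)).trans hlight⟩

theorem Finset.card_le_two_mul_card_filter_le_two {ι : Type*} (s : Finset ι) (f : ι → ℝ)
    (hf : ∀ x ∈ s, 0 ≤ f x) (hsum : ∑ x ∈ s, f x ≤ #s) :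
    (#s : ℝ) ≤ 2 * #{x ∈ s | f x ≤ 2} := by
  classical
  have hlarge : 2 * (#{x ∈ s | ¬f x ≤ 2} : ℝ) ≤ ∑ x ∈ s, f x := calc
    2 * (#{x ∈ s | ¬f x ≤ 2} : ℝ) ≤ ∑ x ∈ s with ¬f x ≤ 2, f x := by
      rw [mul_comm, ← nsmul_eq_mul]
      exact card_nsmul_le_sum _ _ _ fun x hx => (not_le.1 (mem_filter.1 hx).2).le
    _ ≤ ∑ x ∈ s, f x := sum_le_sum_of_subset_of_nonneg (filter_subset _ _) fun x hx _ => hf x hx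
  have hcard := congrArg (Nat.cast : ℕ → ℝ) (card_filter_add_card_filter_not (s := s) (f · ≤ 2))
  push_cast at hcard
  linarith

/-- Signal-strengthening lemma (Fanghänel–Kesselheim–Räcke–Vöcking): every
feasible set `L` contains a `K`-bi-feasible subset of size `Ω(|L|/K)`, with an
absolute constant `c > 0`. -/
theorem signal_strengthening :
    ∃ c : ℝ, 0 < c ∧
      ∀ (ι : Type) (a : ι → ι → ℝ),
        (∀ w v, 0 ≤ a w v) → (∀ w v, a w v ≤ 1) → (∀ v, a v v = 0) →
        ∀ (L : Finset ι) (K : ℝ), 1 ≤ K →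
          (∀ v ∈ L, ∑ w ∈ L, a w v ≤ 1) →
          ∃ L' ⊆ L, c * L.card / K ≤ (L'.card : ℝ) ∧
            (∀ v ∈ L', ∑ w ∈ L', a w v ≤ 1 / K) ∧
            (∀ v ∈ L', ∑ w ∈ L', a v w ≤ 2 / K) := by
  classical
  refine ⟨1 / 8, by norm_num, fun ι a ha0 _ hdiag L K hK hfeas => ?_⟩
  set L₁ := {v ∈ L | ∑ w ∈ L, a v w ≤ 2}
  have hL₁L : L₁ ⊆ L := filter_subset _ _
  have hL₁ : (#L : ℝ) ≤ 2 * #L₁ := card_le_two_mul_card_filter_le_two L _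
    (fun v _ => sum_nonneg fun w _ => ha0 v w) (by rw [sum_comm]; simpa using sum_le_sum hfeas)
  have hL₁deg : ∀ v ∈ L₁, ∑ w ∈ L₁, (a w v + a v w) ≤ 3 := fun v hv => by
    rw [sum_add_distrib]
    linarith [hfeas v (hL₁L hv), (mem_filter.1 hv).2,
      sum_le_sum_of_subset_of_nonneg hL₁L fun w _ _ => ha0 w v,
      sum_le_sum_of_subset_of_nonneg hL₁L fun w _ _ => ha0 v w]
  obtain ⟨m, hm3, hm4⟩ : ∃ m : ℕ, 3 * K ≤ m ∧ (m : ℝ) ≤ 4 * K :=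
    ⟨⌈3 * K⌉₊, Nat.le_ceil _, by linarith [Nat.ceil_lt_add_one (by linarith : 0 ≤ 3 * K)]⟩
  have hm : (0 : ℝ) < m := by linarith
  obtain ⟨t, htL₁, hcard, ht⟩ := L₁.exists_large_subset_sum_le_div ha0 hdiag hL₁deg
    (m := m) (by exact_mod_cast hm)
  have h3m : 3 / (m : ℝ) ≤ 1 / K := by rw [div_le_div_iff₀ hm (by linarith)]; linarith
  refine ⟨t, htL₁.trans hL₁L, ?_, fun v hv => (ht v hv).1.trans h3m,
    fun v hv => (ht v hv).2.trans (h3m.trans ?_)⟩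
  · rw [div_le_iff₀ (by linarith)]
    nlinarith
  · gcongr
    norm_num
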